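/- arXiv:1902.06825 — 3 statements merged into one kernel-verified Lean document; each statement's English description precedes it below -/
import Mathlib

section
/- If the vectors p₀, p₁, …, p_d ∈ ℝⁿ are linearly independent and sθ > 0, h > 0, then the matrix (sθ·h/‖p_λ‖)·δPᵀ·P⊥_{p_λ}·δP is positive definite for every λ ∈ ℝᵈ with p_λ ≠ 0, where δP has columns p_i − p₀ (i = 1,…,d), p_λ = p₀ + δP·λ, and P⊥_{p} = I − ppᵀ/(pᵀp). Consequently F₀(λ) = U_λ + sθ·h·‖p_λ‖ is strictly convex on any convex set where p_λ ≠ 0. -/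
/-!
Linear independence of `p₀, …, p_d` is the same as that of `p₀, p₁ - p₀, …, p_d - p₀`. Hence
`δP x` is a multiple of `p_λ` only for `x = 0`, and `λ ↦ p_λ` is an injective affine map that
never vanishes. The first fact makes `P⊥ δP` injective, and as `P⊥` is a symmetric idempotent,
`δPᵀ P⊥ δP = (P⊥ δP)ᵀ (P⊥ δP)` is positive definite. The second fact keeps `p_a` and `p_b` off a
common ray for `a ≠ b`, so the triangle inequality of the Euclidean norm is strict along every
segment: `λ ↦ ‖p_λ‖` is strictly convex, and the remaining terms of `F₀` are affine.
-/

open Matrix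

section Independence

variable {R M : Type*} [CommRing R] [AddCommGroup M] [Module R M] {d : ℕ}

theorem LinearIndependent.eq_zero_of_sum_smul_sub_add_smul_eq_zero {p : Fin (d + 1) → M}
    (hp : LinearIndependent R p) {x : Fin d → R} {t : R}
    (h : ∑ k, x k • (p k.succ - p 0) + t • p 0 = 0) : x = 0 ∧ t = 0 := by
  have hsum : ∑ i, (Fin.cons (t - ∑ k, x k) x : Fin (d + 1) → R) i • p i = 0 := by
    rw [Fin.sum_univ_succ, ← h]
    simp only [Fin.cons_zero, Fin.cons_succ, smul_sub, Finset.sum_sub_distrib, sub_smul,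
      Finset.sum_smul]
    abel
  have hcoeff := Fintype.linearIndependent_iff.mp hp _ hsum
  have hx : x = 0 := funext fun k => by simpa using hcoeff k.succ
  exact ⟨hx, by simpa [hx] using hcoeff 0⟩

variable {ι : Type*}

def diffMatrix (p : Fin (d + 1) → ι → R) : Matrix ι (Fin d) R := fun i k => p k.succ i - p 0 i

theorem diffMatrix_mulVec (p : Fin (d + 1) → ι → R) (x : Fin d → R) :
    diffMatrix p *ᵥ x = ∑ k, x k • (p k.succ - p 0) := by
  ext i
  simp [mulVec, dotProduct, diffMatrix, Finset.sum_apply, mul_comm]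

theorem LinearIndependent.eq_zero_of_diffMatrix_mulVec_add_smul_eq_zero
    {p : Fin (d + 1) → ι → R} (hp : LinearIndependent R p) {x : Fin d → R} {t : R}
    (h : diffMatrix p *ᵥ x + t • p 0 = 0) : x = 0 ∧ t = 0 :=
  hp.eq_zero_of_sum_smul_sub_add_smul_eq_zero (by rwa [← diffMatrix_mulVec])

theorem LinearIndependent.diffMatrix_mulVec_sub_smul_ne_zero {p : Fin (d + 1) → ι → R}
    (hp : LinearIndependent R p) (lam : Fin d → R) {x : Fin d → R} (hx : x ≠ 0) (c : R) :
    diffMatrix p *ᵥ x - c • (p 0 + diffMatrix p *ᵥ lam) ≠ 0 := by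
  intro h
  obtain ⟨hxc, hc⟩ := hp.eq_zero_of_diffMatrix_mulVec_add_smul_eq_zero (x := x - c • lam)
    (t := -c) (by rw [mulVec_sub, mulVec_smul, ← h]; module)
  rw [neg_eq_zero.mp hc, zero_smul, sub_zero] at hxc
  exact hx hxc

end Independence

section OrthProj

variable {K m : Type*} [Field K] [Fintype m] [DecidableEq m]

def orthProj (v : m → K) : Matrix m m K := 1 - (v ⬝ᵥ v)⁻¹ • vecMulVec v v

theorem orthProj_mulVec (v w : m → K) : orthProj v *ᵥ w = w - ((v ⬝ᵥ w) / (v ⬝ᵥ v)) • v := by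
  rw [orthProj, sub_mulVec, one_mulVec, smul_mulVec, vecMulVec_mulVec, op_smul_eq_smul,
    smul_smul, inv_mul_eq_div]

theorem transpose_orthProj (v : m → K) : (orthProj v)ᵀ = orthProj v := by
  rw [orthProj, transpose_sub, transpose_one, transpose_smul, transpose_vecMulVec]

-- No hypothesis on `v`: for `v ⬝ᵥ v = 0` the junk value `0⁻¹ = 0` gives `orthProj v = 1`.
theorem orthProj_mul_self (v : m → K) : orthProj v * orthProj v = orthProj v := by
  have hsq : vecMulVec v v * vecMulVec v v = (v ⬝ᵥ v) • vecMulVec v v := by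
    rw [vecMulVec_mul_vecMulVec, vecMulVec_smul]
  have hc : (v ⬝ᵥ v)⁻¹ * (v ⬝ᵥ v)⁻¹ * (v ⬝ᵥ v) = (v ⬝ᵥ v)⁻¹ := by
    rcases eq_or_ne (v ⬝ᵥ v) 0 with h | h
    · simp [h]
    · field_simp
  simp only [orthProj, sub_mul, mul_sub, one_mul, mul_one, smul_mul_smul, hsq, smul_smul, hc]
  abel

theorem posDef_transpose_mul_orthProj_mul {n : Type*} [Fintype n] {B : Matrix m n ℝ} {v : m → ℝ}
    (hB : ∀ x ≠ 0, ∀ c : ℝ, B *ᵥ x - c • v ≠ 0) : (Bᵀ * orthProj v * B).PosDef := by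
  have hfactor : Bᵀ * orthProj v * B = (orthProj v * B)ᴴ * (orthProj v * B) := by
    rw [conjTranspose_eq_transpose_of_trivial, transpose_mul, transpose_orthProj]
    conv_lhs => rw [← orthProj_mul_self v]
    simp only [Matrix.mul_assoc]
  rw [hfactor]
  refine PosDef.conjTranspose_mul_self _ fun x y hxy => by_contra fun hne => ?_
  have hzero : orthProj v *ᵥ (B *ᵥ (x - y)) = 0 := by
    rw [mulVec_mulVec, mulVec_sub, hxy, sub_self]
  rw [orthProj_mulVec] at hzero
  exact hB _ (sub_ne_zero.mpr hne) _ hzero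

end OrthProj

section StrictConvexity

theorem AffineMap.not_sameRay_of_injective {𝕜 E F : Type*} [Field 𝕜] [LinearOrder 𝕜] [IsStrictOrderedRing 𝕜]
    [AddCommGroup E] [Module 𝕜 E] [AddCommGroup F] [Module 𝕜 F] {f : E →ᵃ[𝕜] F}
    (hf : Function.Injective f) (h0 : ∀ x, f x ≠ 0) {a b : E} (hab : a ≠ b) :
    ¬SameRay 𝕜 (f a) (f b) := by
  intro hray
  obtain ⟨r₁, r₂, hr₁, -, hr⟩ := hray.exists_pos (h0 a) (h0 b)
  rcases eq_or_ne r₁ r₂ with rfl | hne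
  · exact hab (hf (smul_right_injective F hr₁.ne' hr))
  -- For `r₁ ≠ r₂`, `r₁ f a = r₂ f b` says that `f` vanishes at an affine combination of `a`, `b`.
  · have hsum : r₁ / (r₁ - r₂) + -r₂ / (r₁ - r₂) = 1 := by
      field_simp [sub_ne_zero.mpr hne]; ring
    apply h0 ((r₁ / (r₁ - r₂)) • a + (-r₂ / (r₁ - r₂)) • b)
    rw [Convex.combo_affine_apply hsum, div_eq_inv_mul, div_eq_inv_mul, mul_smul, mul_smul,
      ← smul_add, neg_smul, hr, add_neg_cancel, smul_zero]

theorem AffineMap.strictConvexOn_norm {E F : Type*} [AddCommGroup E] [Module ℝ E]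
    [NormedAddCommGroup F] [NormedSpace ℝ F] [StrictConvexSpace ℝ F] {s : Set E}
    (hs : Convex ℝ s) {f : E →ᵃ[ℝ] F} (hf : Function.Injective f) (h0 : ∀ x, f x ≠ 0) :
    StrictConvexOn ℝ s fun x => ‖f x‖ := by
  refine ⟨hs, fun a _ b _ hab t u ht hu htu => ?_⟩
  have hray : ¬SameRay ℝ (t • f a) (u • f b) := fun h => by
    have := (h.pos_smul_left (inv_pos.2 ht)).pos_smul_right (inv_pos.2 hu)
    rw [inv_smul_smul₀ ht.ne', inv_smul_smul₀ hu.ne'] at this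
    exact f.not_sameRay_of_injective hf h0 hab this
  calc ‖f (t • a + u • b)‖ = ‖t • f a + u • f b‖ := by rw [Convex.combo_affine_apply htu]
    _ < ‖t • f a‖ + ‖u • f b‖ := norm_add_lt_of_not_sameRay hray
    _ = t • ‖f a‖ + u • ‖f b‖ := by
      rw [norm_smul, norm_smul, Real.norm_of_nonneg ht.le, Real.norm_of_nonneg hu.le]; rfl

end StrictConvexity

section AffineParam

variable {ι : Type*} {d : ℕ}

theorem EuclideanSpace.norm_toLp_eq_sqrt_dotProduct [Fintype ι] (v : ι → ℝ) :
    ‖WithLp.toLp 2 v‖ = √(v ⬝ᵥ v) := by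
  rw [norm_eq_sqrt_real_inner, EuclideanSpace.inner_toLp_toLp, star_trivial]

def affineParam (p : Fin (d + 1) → ι → ℝ) : (Fin d → ℝ) →ᵃ[ℝ] EuclideanSpace ℝ ι where
  toFun lam := WithLp.toLp 2 (p 0 + diffMatrix p *ᵥ lam)
  linear := (WithLp.linearEquiv 2 ℝ (ι → ℝ)).symm.toLinearMap ∘ₗ (diffMatrix p).mulVecLin
  map_vadd' lam v := by
    change WithLp.toLp 2 (p 0 + diffMatrix p *ᵥ (v + lam))
      = WithLp.toLp 2 (diffMatrix p *ᵥ v) + WithLp.toLp 2 (p 0 + diffMatrix p *ᵥ lam)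
    rw [← WithLp.toLp_add, mulVec_add, add_left_comm]

theorem affineParam_apply (p : Fin (d + 1) → ι → ℝ) (lam : Fin d → ℝ) :
    affineParam p lam = WithLp.toLp 2 (p 0 + diffMatrix p *ᵥ lam) := rfl

variable {p : Fin (d + 1) → ι → ℝ}

theorem LinearIndependent.affineParam_injective (hp : LinearIndependent ℝ p) :
    Function.Injective (affineParam p) := by
  intro a b hab
  have hab' : diffMatrix p *ᵥ a = diffMatrix p *ᵥ b := by
    simpa [affineParam_apply] using hab
  refine sub_eq_zero.mp (hp.eq_zero_of_diffMatrix_mulVec_add_smul_eq_zero (t := 0) ?_).1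
  rw [mulVec_sub, hab', sub_self, zero_smul, add_zero]

theorem LinearIndependent.affineParam_ne_zero (hp : LinearIndependent ℝ p) (lam : Fin d → ℝ) :
    affineParam p lam ≠ 0 := by
  intro h
  rw [affineParam_apply, WithLp.toLp_eq_zero] at h
  exact one_ne_zero (hp.eq_zero_of_diffMatrix_mulVec_add_smul_eq_zero (x := lam) (t := 1)
    (by rw [one_smul, add_comm, h])).2

end AffineParam

theorem StrictConvexOn.const_mul {E : Type*} [AddCommGroup E] [Module ℝ E] {s : Set E}
    {f : E → ℝ} (hf : StrictConvexOn ℝ s f) {c : ℝ} (hc : 0 < c) :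
    StrictConvexOn ℝ s fun x => c * f x := by
  refine ⟨hf.1, fun a ha b hb hab t u ht hu htu => ?_⟩
  calc c * f (t • a + u • b) < c * (t • f a + u • f b) :=
        mul_lt_mul_of_pos_left (hf.2 ha hb hab ht hu htu) hc
    _ = t • (c * f a) + u • (c * f b) := by simp only [smul_eq_mul]; ring

/-- If `p₀,…,p_d` are linearly independent and `sθ, h > 0`, then the Hessian matrix
`(sθh/‖p_λ‖)·δPᵀ·P⊥_{p_λ}·δP` is positive definite wherever `p_λ ≠ 0`, and
consequently `F₀` is strictly convex on any convex set where `p_λ ≠ 0`. -/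
theorem stmt2 {n d : ℕ} (p : Fin (d + 1) → (Fin n → ℝ))
    (hli : LinearIndependent ℝ p) (sθ h : ℝ) (hs : 0 < sθ) (hh : 0 < h)
    (U0 : ℝ) (δU : Fin d → ℝ) :
    let δP : Matrix (Fin n) (Fin d) ℝ := fun i k => p k.succ i - p 0 i
    let pl : (Fin d → ℝ) → (Fin n → ℝ) := fun lam => p 0 + δP.mulVec lam
    (∀ lam : Fin d → ℝ, pl lam ≠ 0 →
      ((sθ * h / Real.sqrt (pl lam ⬝ᵥ pl lam)) •
        (δP.transpose *
          ((1 : Matrix (Fin n) (Fin n) ℝ) -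
            ((pl lam ⬝ᵥ pl lam)⁻¹ • vecMulVec (pl lam) (pl lam))) * δP)).PosDef) ∧
    ∀ S : Set (Fin d → ℝ), Convex ℝ S → (∀ lam ∈ S, pl lam ≠ 0) →
      StrictConvexOn ℝ S
        (fun lam => U0 + δU ⬝ᵥ lam + sθ * h * Real.sqrt (pl lam ⬝ᵥ pl lam)) := by
  intro δP pl
  refine ⟨fun lam _ => ?_, fun S hS _ => ?_⟩
  · have hnorm : 0 < √(pl lam ⬝ᵥ pl lam) := by
      rw [← EuclideanSpace.norm_toLp_eq_sqrt_dotProduct]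
      exact norm_pos_iff.mpr (hli.affineParam_ne_zero lam)
    exact (posDef_transpose_mul_orthProj_mul
      fun x hx c => hli.diffMatrix_mulVec_sub_smul_ne_zero lam hx c).smul
      (div_pos (mul_pos hs hh) hnorm)
  · have hlin : ConvexOn ℝ S fun lam => U0 + δU ⬝ᵥ lam :=
      (convexOn_const U0 hS).add ((dotProductBilin ℝ ℝ δU).convexOn hS)
    have hnorm : StrictConvexOn ℝ S fun lam => sθ * h * ‖affineParam p lam‖ :=
      (AffineMap.strictConvexOn_norm hS hli.affineParam_injective hli.affineParam_ne_zero).const_mul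
        (mul_pos hs hh)
    have hsum := hlin.add_strictConvexOn hnorm
    simp only [affineParam_apply, EuclideanSpace.norm_toLp_eq_sqrt_dotProduct] at hsum
    exact hsum
end

section
/- Suppose λ* minimizes F₀(λ) = U₀ + δUᵀλ + sθ·h·‖p₀ + δP·λ‖ over ℝᵈ, where δP = QR is a reduced QR decomposition (QᵀQ = I_d, R upper triangular and invertible). Then the first-order condition ∇F₀(λ*) = 0 implies Qᵀ·(p_{λ*}/‖p_{λ*}‖) = −R^{−ᵀ}·δU/(sθ·h), and consequently ‖p_{λ*}‖² · (1 − ‖R^{−ᵀ}δU/(sθh)‖²) = p₀ᵀ·(I − QQᵀ)·p₀. -/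
open Matrix

/-- First-order condition for `F₀` with reduced QR decomposition `δP = QR`:
`Qᵀν_{λ*} = −R^{−ᵀ}δU/(sθh)` and
`‖p_{λ*}‖²(1 − ‖R^{−ᵀ}δU/(sθh)‖²) = p₀ᵀ(I − QQᵀ)p₀`. -/
theorem stmt4 {n d : ℕ} (p0 : Fin n → ℝ) (δP Q : Matrix (Fin n) (Fin d) ℝ)
    (R : Matrix (Fin d) (Fin d) ℝ) (hQR : δP = Q * R) (hQ : Q.transpose * Q = 1)
    (hR : IsUnit R.det) (hRT : R.BlockTriangular id)
    (U0 : ℝ) (δU : Fin d → ℝ) (sθ h : ℝ) (hs : 0 < sθ) (hh : 0 < h)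
    (lam : Fin d → ℝ) (hp : p0 + δP.mulVec lam ≠ 0)
    (hlt : Real.sqrt ((R.transpose)⁻¹.mulVec δU ⬝ᵥ (R.transpose)⁻¹.mulVec δU) < sθ * h)
    (hcrit : δU +
        ((sθ * h) / Real.sqrt ((p0 + δP.mulVec lam) ⬝ᵥ (p0 + δP.mulVec lam))) •
          δP.transpose.mulVec (p0 + δP.mulVec lam) = 0) :
    Q.transpose.mulVec
        ((Real.sqrt ((p0 + δP.mulVec lam) ⬝ᵥ (p0 + δP.mulVec lam)))⁻¹ •
          (p0 + δP.mulVec lam)) =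
      -((sθ * h)⁻¹ • (R.transpose)⁻¹.mulVec δU) ∧
    ((p0 + δP.mulVec lam) ⬝ᵥ (p0 + δP.mulVec lam)) *
        (1 - ((sθ * h)⁻¹ • (R.transpose)⁻¹.mulVec δU) ⬝ᵥ
            ((sθ * h)⁻¹ • (R.transpose)⁻¹.mulVec δU)) =
      p0 ⬝ᵥ (((1 : Matrix (Fin n) (Fin n) ℝ) - Q * Q.transpose).mulVec p0) := by
  set p : Fin n → ℝ := p0 + δP.mulVec lam with hpdef
  set c : ℝ := sθ * h with hcdef
  have hc : c ≠ 0 := by positivity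
  have hnn : 0 ≤ p ⬝ᵥ p := by
    exact Finset.sum_nonneg fun i _ => mul_self_nonneg _
  have hpp : 0 < p ⬝ᵥ p := by
    rcases hnn.lt_or_eq with h' | h'
    · exact h'
    · exact absurd (dotProduct_self_eq_zero.mp h'.symm) hp
  set N : ℝ := Real.sqrt (p ⬝ᵥ p) with hNdef
  have hN : 0 < N := Real.sqrt_pos.mpr hpp
  have hN2 : N * N = p ⬝ᵥ p := Real.mul_self_sqrt hnn
  set w : Fin d → ℝ := (R.transpose)⁻¹.mulVec δU with hwdef
  -- from the critical point condition
  have h0 : (c / N) • δP.transpose.mulVec p = -δU := eq_neg_of_add_eq_zero_right hcrit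
  have h1 : δP.transpose.mulVec p = (-(N / c)) • δU := by
    have := congrArg (fun v => (N / c) • v) h0
    simp only [smul_smul] at this
    rw [div_mul_div_comm, mul_comm N c, div_self (by positivity), one_smul] at this
    rw [this, smul_neg, neg_smul]
  have hRdet : IsUnit R.transpose.det := by rwa [Matrix.det_transpose]
  have h2 : Q.transpose.mulVec p = (-(N / c)) • w := by
    rw [hQR, Matrix.transpose_mul] at h1
    have h1' : (R.transpose)⁻¹.mulVec ((R.transpose * Q.transpose).mulVec p)
        = (-(N / c)) • w := by rw [h1, Matrix.mulVec_smul]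
    rwa [← Matrix.mulVec_mulVec, Matrix.mulVec_mulVec (Q.transpose.mulVec p),
      Matrix.nonsing_inv_mul _ hRdet, Matrix.one_mulVec] at h1'
  constructor
  · rw [Matrix.mulVec_smul, h2, smul_smul]
    have : N⁻¹ * -(N / c) = -c⁻¹ := by field_simp
    rw [this, neg_smul]
  · -- the projector kills δP
    have hMδP : ((1 : Matrix (Fin n) (Fin n) ℝ) - Q * Q.transpose) * δP = 0 := by
      rw [hQR, Matrix.sub_mul, Matrix.one_mul, Matrix.mul_assoc,
        ← Matrix.mul_assoc Q.transpose, hQ, Matrix.one_mul, sub_self]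
    have hMp : ((1 : Matrix (Fin n) (Fin n) ℝ) - Q * Q.transpose).mulVec p =
        ((1 : Matrix (Fin n) (Fin n) ℝ) - Q * Q.transpose).mulVec p0 := by
      rw [hpdef, Matrix.mulVec_add, Matrix.mulVec_mulVec, hMδP, Matrix.zero_mulVec, add_zero]
    have hdot0 : δP.mulVec lam ⬝ᵥ ((1 : Matrix (Fin n) (Fin n) ℝ) - Q * Q.transpose).mulVec p0
        = 0 := by
      rw [Matrix.dotProduct_mulVec, Matrix.vecMul_mulVec]
      have h3 : δP.transpose * ((1 : Matrix (Fin n) (Fin n) ℝ) - Q * Q.transpose) = 0 := by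
        have := congrArg Matrix.transpose hMδP
        rwa [Matrix.transpose_mul, Matrix.transpose_sub, Matrix.transpose_one,
          Matrix.transpose_mul, Matrix.transpose_transpose, Matrix.transpose_zero] at this
      rw [h3, Matrix.vecMul_zero, zero_dotProduct]
    have key : p0 ⬝ᵥ ((1 : Matrix (Fin n) (Fin n) ℝ) - Q * Q.transpose).mulVec p0 =
        p ⬝ᵥ p - (Q.transpose.mulVec p) ⬝ᵥ (Q.transpose.mulVec p) := by
      have e1 : p0 ⬝ᵥ ((1 : Matrix (Fin n) (Fin n) ℝ) - Q * Q.transpose).mulVec p0 =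
          p ⬝ᵥ ((1 : Matrix (Fin n) (Fin n) ℝ) - Q * Q.transpose).mulVec p := by
        rw [hMp, hpdef, add_dotProduct, hdot0, add_zero]
      rw [e1, Matrix.sub_mulVec, dotProduct_sub, Matrix.one_mulVec]
      congr 1
      rw [← Matrix.mulVec_mulVec, Matrix.dotProduct_mulVec, Matrix.mulVec_transpose]
    rw [key, h2]
    rw [smul_dotProduct, dotProduct_smul, smul_dotProduct, dotProduct_smul,
      smul_eq_mul, smul_eq_mul, smul_eq_mul, smul_eq_mul, ← hN2]
    field_simp
end

section
/- Upwind finite-difference quadratic: with M = [δPᵀ; pᵢᵀ] invertible as above, the solution ∇U of M·∇U = (δU, U₀ − Û) with the constraint ‖∇U‖ = s·h and ‖R^{−ᵀ}δU‖ ≤ s·h is given by Û = Uᵢ − pᵢᵀQR^{−ᵀ}δU + ‖p_min‖·√((sh)² − ‖R^{−ᵀ}δU‖²), where p_min = (I − QQᵀ)pᵢ and Uᵢ = U₀ + (δU)ᵢ conventions as in the simplex setup (taking the root with larger Û). -/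
open Matrix

/-! Write `∇U = QQᵀ∇U + v` with `v = (I − QQᵀ)∇U`. The equations `Uₖ − U₀ = ∇U·(pₖ − p₀)` say
`Rᵀ(Qᵀ∇U) = δU`, so `Qᵀ∇U = R⁻ᵀδU` and, by Pythagoras, `‖v‖² = (sh)² − ‖R⁻ᵀδU‖²`. As `v` is
orthogonal to the range of `Q`, which contains every `pₖ − p₀`, the value `a = v·pⱼ` does not
depend on `j`. The reflected gradient `∇U − 2v` has the same length and solves the system with
`Û + 2a`, so maximality of `Û` gives `a ≤ 0`. Finally `ker Qᵀ` is a line containing `v` and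
`p_min ≠ 0`, hence `v·pᵢ = v·p_min = −‖v‖‖p_min‖`, and `Û = Uᵢ − ∇U·pᵢ` is the claimed formula. -/

namespace Matrix

section OrthonormalColumns

variable {K ι κ : Type*} [Fintype ι] [Fintype κ]

theorem dotProduct_mulVec_eq_zero_of_transpose_mulVec_eq_zero [CommRing K]
    (Q : Matrix ι κ K) {v : ι → K} (hv : Qᵀ *ᵥ v = 0) (x : κ → K) :
    v ⬝ᵥ Q *ᵥ x = 0 := by
  rw [dotProduct_mulVec, ← mulVec_transpose, hv, zero_dotProduct]

theorem finrank_ker_transpose_mulVecLin_add_card [Field K] [DecidableEq κ] {Q : Matrix ι κ K}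
    (hQ : Qᵀ * Q = 1) :
    Module.finrank K (LinearMap.ker Qᵀ.mulVecLin) + Fintype.card κ = Fintype.card ι := by
  have hrange : LinearMap.range Qᵀ.mulVecLin = ⊤ :=
    LinearMap.range_eq_top.mpr fun y => ⟨Q *ᵥ y, by
      rw [mulVecLin_apply, mulVec_mulVec, hQ, one_mulVec]⟩
  have := LinearMap.finrank_range_add_finrank_ker Qᵀ.mulVecLin
  rw [hrange, finrank_top, Module.finrank_fintype_fun_eq_card,
    Module.finrank_fintype_fun_eq_card] at this
  omega

theorem exists_smul_eq_of_transpose_mulVec_eq_zero [Field K] [DecidableEq κ]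
    {Q : Matrix ι κ K} (hQ : Qᵀ * Q = 1) (hcard : Fintype.card κ + 1 = Fintype.card ι) {p v : ι → K}
    (hp : Qᵀ *ᵥ p = 0) (hp0 : p ≠ 0) (hv : Qᵀ *ᵥ v = 0) : ∃ c : K, v = c • p := by
  have hker : Module.finrank K (LinearMap.ker Qᵀ.mulVecLin) = 1 := by
    have := finrank_ker_transpose_mulVecLin_add_card hQ
    omega
  have hp' : (⟨p, hp⟩ : LinearMap.ker Qᵀ.mulVecLin) ≠ 0 := by
    simpa [Subtype.ext_iff] using hp0
  obtain ⟨c, hc⟩ := (finrank_eq_one_iff_of_nonzero' _ hp').mp hker ⟨v, hv⟩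
  exact ⟨c, by simpa [Subtype.ext_iff] using hc.symm⟩

variable [DecidableEq ι]

theorem one_sub_mul_transpose_mulVec [CommRing K] (Q : Matrix ι κ K) (x : ι → K) :
    (1 - Q * Qᵀ) *ᵥ x = x - Q *ᵥ (Qᵀ *ᵥ x) := by
  rw [sub_mulVec, one_mulVec, mulVec_mulVec]

variable [DecidableEq κ]

theorem transpose_mulVec_one_sub_mul_transpose_mulVec [CommRing K] {Q : Matrix ι κ K}
    (hQ : Qᵀ * Q = 1) (x : ι → K) : Qᵀ *ᵥ ((1 - Q * Qᵀ) *ᵥ x) = 0 := by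
  rw [mulVec_mulVec, Matrix.mul_sub, Matrix.mul_one, ← Matrix.mul_assoc, hQ, Matrix.one_mul,
    sub_self, zero_mulVec]

theorem dotProduct_self_eq_add_one_sub_mul_transpose [CommRing K] {Q : Matrix ι κ K}
    (hQ : Qᵀ * Q = 1) (x : ι → K) :
    x ⬝ᵥ x = (Qᵀ *ᵥ x) ⬝ᵥ (Qᵀ *ᵥ x) + ((1 - Q * Qᵀ) *ᵥ x) ⬝ᵥ ((1 - Q * Qᵀ) *ᵥ x) := by
  set v := (1 - Q * Qᵀ) *ᵥ x
  have hQv : Qᵀ *ᵥ v = 0 := transpose_mulVec_one_sub_mul_transpose_mulVec hQ x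
  have hx : x = Q *ᵥ (Qᵀ *ᵥ x) + v := by
    simp only [v, one_sub_mul_transpose_mulVec]
    abel
  have hQQ : (Q *ᵥ (Qᵀ *ᵥ x)) ⬝ᵥ (Q *ᵥ (Qᵀ *ᵥ x)) = (Qᵀ *ᵥ x) ⬝ᵥ (Qᵀ *ᵥ x) := by
    rw [dotProduct_mulVec, ← mulVec_transpose, mulVec_mulVec, hQ, one_mulVec]
  have hcross := dotProduct_mulVec_eq_zero_of_transpose_mulVec_eq_zero Q hQv (Qᵀ *ᵥ x)
  conv_lhs => rw [hx]
  rw [add_dotProduct, dotProduct_add, dotProduct_add, hQQ, dotProduct_comm _ v, hcross]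
  ring

end OrthonormalColumns

end Matrix

theorem Real.sqrt_dotProduct_self_mul_sqrt_dotProduct_self_of_eq_smul {ι : Type*} [Fintype ι]
    {p v : ι → ℝ} {c : ℝ} (hp : p ≠ 0) (hv : v = c • p) (hvp : v ⬝ᵥ p ≤ 0) :
    √(p ⬝ᵥ p) * √(v ⬝ᵥ v) = -(v ⬝ᵥ p) := by
  have hpp : 0 < p ⬝ᵥ p := by simpa using dotProduct_star_self_pos_iff.mpr hp
  subst hv
  simp only [smul_dotProduct, dotProduct_smul, smul_eq_mul] at hvp ⊢
  have hc : c ≤ 0 := nonpos_of_mul_nonpos_left hvp hpp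
  rw [← mul_assoc, ← sq,
    Real.sqrt_mul (sq_nonneg c), Real.sqrt_sq_eq_abs, abs_of_nonpos hc]
  linear_combination (-c) * Real.mul_self_sqrt hpp.le

section Simplex

variable {K ι : Type*} [Fintype ι] {m : ℕ} {pts : Fin (m + 1) → ι → K}

theorem transpose_mulVec_eq_of_forall_sub_eq_dotProduct [CommRing K]
    {Q : Matrix ι (Fin m) K} {R : Matrix (Fin m) (Fin m) K}
    (hδP : (fun i (k : Fin m) => pts k.succ i - pts 0 i) = Q * R) (hR : IsUnit R.det)
    {U : Fin (m + 1) → K} {Uhat : K} {g : ι → K} (hsys : ∀ j, U j - Uhat = g ⬝ᵥ pts j) :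
    Qᵀ *ᵥ g = (Rᵀ)⁻¹ *ᵥ fun k => U k.succ - U 0 := by
  have hδU : (fun k => U k.succ - U 0) = Rᵀ *ᵥ (Qᵀ *ᵥ g) := by
    rw [mulVec_mulVec, ← transpose_mul, ← hδP]
    funext k
    rw [← sub_sub_sub_cancel_right (U k.succ) (U 0) Uhat, hsys, hsys, ← dotProduct_sub]
    simp only [mulVec, dotProduct, mul_comm]
    rfl
  rw [hδU, mulVec_mulVec, nonsing_inv_mul _ (by rwa [det_transpose]), one_mulVec]

theorem dotProduct_eq_dotProduct_zero_of_transpose_mulVec_eq_zero [CommRing K]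
    {Q : Matrix ι (Fin m) K} {R : Matrix (Fin m) (Fin m) K}
    (hδP : (fun i (k : Fin m) => pts k.succ i - pts 0 i) = Q * R) {v : ι → K}
    (hv : Qᵀ *ᵥ v = 0) (j : Fin (m + 1)) : v ⬝ᵥ pts j = v ⬝ᵥ pts 0 := by
  refine Fin.cases rfl (fun k => ?_) j
  have hcol : pts k.succ - pts 0 = Q *ᵥ fun l => R l k := by
    funext i
    simpa [mul_apply, mulVec, dotProduct] using congrFun (congrFun hδP i) k
  rw [← sub_eq_zero, ← dotProduct_sub, hcol,
    dotProduct_mulVec_eq_zero_of_transpose_mulVec_eq_zero Q hv]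

end Simplex

theorem nonpos_of_maximal_solution {K ι κ : Type*} [Fintype ι] [Field K] [LinearOrder K]
    [IsStrictOrderedRing K] {pts : κ → ι → K} {U : κ → K} {Uhat r a : K} {g v : ι → K}
    (hsys : ∀ j, U j - Uhat = g ⬝ᵥ pts j) (hnorm : g ⬝ᵥ g = r)
    (hmax : ∀ (Uhat' : K) (g' : ι → K),
      (∀ j, U j - Uhat' = g' ⬝ᵥ pts j) → g' ⬝ᵥ g' = r → Uhat' ≤ Uhat)
    (hgv : (g - v) ⬝ᵥ v = 0) (hv : ∀ j, v ⬝ᵥ pts j = a) : a ≤ 0 := by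
  have hsys' : ∀ j, U j - (Uhat + 2 * a) = (g - (2 : K) • v) ⬝ᵥ pts j := fun j => by
    rw [sub_dotProduct, smul_dotProduct, hv, ← hsys, smul_eq_mul]
    ring
  have hnorm' : (g - (2 : K) • v) ⬝ᵥ (g - (2 : K) • v) = r := by
    rw [sub_dotProduct] at hgv
    simp only [sub_dotProduct, dotProduct_sub, smul_dotProduct, dotProduct_smul, smul_eq_mul,
      dotProduct_comm v g] at hgv ⊢
    linear_combination hnorm - 4 * hgv
  linarith [hmax _ _ hsys' hnorm']

theorem stmt17_general {m : ℕ} (pts : Fin (m + 1) → (Fin (m + 1) → ℝ))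
    (Q : Matrix (Fin (m + 1)) (Fin m) ℝ) (R : Matrix (Fin m) (Fin m) ℝ)
    (hδP : (fun i (k : Fin m) => pts k.succ i - pts 0 i) = Q * R)
    (hQ : Q.transpose * Q = 1) (hR : IsUnit R.det)
    (s h : ℝ)
    (U : Fin (m + 1) → ℝ) (Uhat : ℝ) (gradU : Fin (m + 1) → ℝ)
    (δU : Fin m → ℝ) (hδU : δU = fun k => U k.succ - U 0)
    (hsys : ∀ i, U i - Uhat = gradU ⬝ᵥ pts i)
    (hnorm : gradU ⬝ᵥ gradU = (s * h) ^ 2)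
    (hmax : ∀ (Uhat' : ℝ) (g' : Fin (m + 1) → ℝ),
      (∀ i, U i - Uhat' = g' ⬝ᵥ pts i) → g' ⬝ᵥ g' = (s * h) ^ 2 → Uhat' ≤ Uhat) :
    ∀ i : Fin (m + 1),
      ((1 : Matrix (Fin (m + 1)) (Fin (m + 1)) ℝ) - Q * Q.transpose).mulVec (pts i)
          ≠ 0 →
      Uhat = U i - pts i ⬝ᵥ (Q * (R.transpose)⁻¹).mulVec δU +
        Real.sqrt
          ((((1 : Matrix (Fin (m + 1)) (Fin (m + 1)) ℝ) - Q * Q.transpose).mulVec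
              (pts i)) ⬝ᵥ
            (((1 : Matrix (Fin (m + 1)) (Fin (m + 1)) ℝ) - Q * Q.transpose).mulVec
              (pts i))) *
        Real.sqrt ((s * h) ^ 2 -
          (R.transpose)⁻¹.mulVec δU ⬝ᵥ (R.transpose)⁻¹.mulVec δU) := by
  intro i hpm
  set v := (1 - Q * Qᵀ) *ᵥ gradU
  have hw : Qᵀ *ᵥ gradU = (Rᵀ)⁻¹ *ᵥ δU :=
    hδU ▸ transpose_mulVec_eq_of_forall_sub_eq_dotProduct hδP hR hsys
  have hQv : Qᵀ *ᵥ v = 0 := transpose_mulVec_one_sub_mul_transpose_mulVec hQ gradU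
  have hgv : gradU - v = Q *ᵥ (Qᵀ *ᵥ gradU) := by
    simp only [v, one_sub_mul_transpose_mulVec, sub_sub_cancel]
  have hconst := dotProduct_eq_dotProduct_zero_of_transpose_mulVec_eq_zero hδP hQv
  have hv0 : v ⬝ᵥ pts 0 ≤ 0 := by
    refine nonpos_of_maximal_solution hsys hnorm hmax ?_ hconst
    rw [hgv, dotProduct_comm]
    exact dotProduct_mulVec_eq_zero_of_transpose_mulVec_eq_zero Q hQv _
  obtain ⟨c, hc⟩ := exists_smul_eq_of_transpose_mulVec_eq_zero hQ (by simp)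
    (transpose_mulVec_one_sub_mul_transpose_mulVec hQ (pts i)) hpm hQv
  have hvpm : v ⬝ᵥ (1 - Q * Qᵀ) *ᵥ pts i = v ⬝ᵥ pts i := by
    rw [one_sub_mul_transpose_mulVec, dotProduct_sub,
      dotProduct_mulVec_eq_zero_of_transpose_mulVec_eq_zero Q hQv, sub_zero]
  have hvv : v ⬝ᵥ v = (s * h) ^ 2 - (Rᵀ)⁻¹ *ᵥ δU ⬝ᵥ (Rᵀ)⁻¹ *ᵥ δU := by
    rw [← hnorm, dotProduct_self_eq_add_one_sub_mul_transpose hQ gradU, hw]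
    ring
  have hsplit : gradU ⬝ᵥ pts i = pts i ⬝ᵥ (Q * (Rᵀ)⁻¹) *ᵥ δU + v ⬝ᵥ pts i := by
    rw [← mulVec_mulVec, ← hw, ← hgv, dotProduct_sub, dotProduct_comm v,
      dotProduct_comm gradU]
    ring
  rw [← hvv, Real.sqrt_dotProduct_self_mul_sqrt_dotProduct_self_of_eq_smul hpm hc
    (by rw [hvpm, hconst]; exact hv0), hvpm]
  linarith [hsys i]

/-- Upwind finite-difference quadratic: if `Û` and `∇U` satisfy
`Uᵢ − Û = ∇Uᵀpᵢ` for all `i` and `‖∇U‖ = s·h`, with `Û` the larger root, then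
`Û = Uᵢ − pᵢᵀQR^{−ᵀ}δU + ‖p_min‖·√((sh)² − ‖R^{−ᵀ}δU‖²)`, where
`p_min = (I − QQᵀ)pᵢ` and `δP = QR` is the reduced QR factorization of
`δP = [p₁−p₀,…,p_{n−1}−p₀]`. -/
theorem stmt17 {m : ℕ} (pts : Fin (m + 1) → (Fin (m + 1) → ℝ))
    (hli : LinearIndependent ℝ pts)
    (Q : Matrix (Fin (m + 1)) (Fin m) ℝ) (R : Matrix (Fin m) (Fin m) ℝ)
    (hδP : (fun i (k : Fin m) => pts k.succ i - pts 0 i) = Q * R)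
    (hQ : Q.transpose * Q = 1) (hR : IsUnit R.det)
    (s h : ℝ) (hs : 0 < s) (hh : 0 < h)
    (U : Fin (m + 1) → ℝ) (Uhat : ℝ) (gradU : Fin (m + 1) → ℝ)
    (δU : Fin m → ℝ) (hδU : δU = fun k => U k.succ - U 0)
    (hsys : ∀ i, U i - Uhat = gradU ⬝ᵥ pts i)
    (hnorm : gradU ⬝ᵥ gradU = (s * h) ^ 2)
    (hmax : ∀ (Uhat' : ℝ) (g' : Fin (m + 1) → ℝ),
      (∀ i, U i - Uhat' = g' ⬝ᵥ pts i) → g' ⬝ᵥ g' = (s * h) ^ 2 → Uhat' ≤ Uhat)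
    (hcompat : Real.sqrt ((R.transpose)⁻¹.mulVec δU ⬝ᵥ (R.transpose)⁻¹.mulVec δU)
      ≤ s * h) :
    ∀ i : Fin (m + 1),
      ((1 : Matrix (Fin (m + 1)) (Fin (m + 1)) ℝ) - Q * Q.transpose).mulVec (pts i)
          ≠ 0 →
      Uhat = U i - pts i ⬝ᵥ (Q * (R.transpose)⁻¹).mulVec δU +
        Real.sqrt
          ((((1 : Matrix (Fin (m + 1)) (Fin (m + 1)) ℝ) - Q * Q.transpose).mulVec
              (pts i)) ⬝ᵥ
            (((1 : Matrix (Fin (m + 1)) (Fin (m + 1)) ℝ) - Q * Q.transpose).mulVec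
              (pts i))) *
        Real.sqrt ((s * h) ^ 2 -
          (R.transpose)⁻¹.mulVec δU ⬝ᵥ (R.transpose)⁻¹.mulVec δU) :=
  stmt17_general pts Q R hδP hQ hR s h U Uhat gradU δU hδU hsys hnorm hmax
end
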